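/- arXiv:1308.0952 — 9 statements merged into one kernel-verified Lean document; each statement's English description precedes it below -/
import Mathlib

section
/- For every real θ, p_θ + p_{θ+π} > 2, where p_θ = max{2cos(θ-2π/3), 2cos θ, 2cos(θ+2π/3)}. -/
open Matrix Complex

noncomputable def pTheta (θ : ℝ) : ℝ :=
  max (max (2 * Real.cos (θ - 2 * Real.pi / 3)) (2 * Real.cos θ))
    (2 * Real.cos (θ + 2 * Real.pi / 3))

theorem stmt2 (θ : ℝ) : 2 < pTheta θ + pTheta (θ + Real.pi) := by
  have h3 : Real.sqrt 3 ^ 2 = 3 := Real.sq_sqrt (by norm_num)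
  have hc : Real.cos (2 * Real.pi / 3) = -(1/2) := by
    rw [show 2 * Real.pi / 3 = Real.pi - Real.pi / 3 by ring, Real.cos_pi_sub,
      Real.cos_pi_div_three]
  have hsn : Real.sin (2 * Real.pi / 3) = Real.sqrt 3 / 2 := by
    rw [show 2 * Real.pi / 3 = Real.pi - Real.pi / 3 by ring, Real.sin_pi_sub,
      Real.sin_pi_div_three]
  set c := Real.cos θ with hcdef
  set s := Real.sin θ with hsdef
  have hpyth : s ^ 2 + c ^ 2 = 1 := Real.sin_sq_add_cos_sq θ
  have hcp : Real.cos (θ + Real.pi) = -c := Real.cos_add_pi θ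
  have hsp : Real.sin (θ + Real.pi) = -s := Real.sin_add_pi θ
  have hp : pTheta θ = max (max (-c + Real.sqrt 3 * s) (2*c)) (-c - Real.sqrt 3 * s) := by
    unfold pTheta
    rw [Real.cos_sub, Real.cos_add, hc, hsn, ← hcdef, ← hsdef]
    ring_nf
  have hq : pTheta (θ + Real.pi)
      = max (max (c - Real.sqrt 3 * s) (-(2*c))) (c + Real.sqrt 3 * s) := by
    unfold pTheta
    rw [Real.cos_sub, hcp, hsp, Real.cos_add, hcp, hsp, hc, hsn]
    ring_nf
  rw [hp, hq]
  have p1 : -c + Real.sqrt 3 * s ≤ max (max (-c + Real.sqrt 3 * s) (2*c)) (-c - Real.sqrt 3 * s) :=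
    le_trans (le_max_left _ _) (le_max_left _ _)
  have p2 : 2*c ≤ max (max (-c + Real.sqrt 3 * s) (2*c)) (-c - Real.sqrt 3 * s) :=
    le_trans (le_max_right _ _) (le_max_left _ _)
  have p3 : -c - Real.sqrt 3 * s ≤ max (max (-c + Real.sqrt 3 * s) (2*c)) (-c - Real.sqrt 3 * s) :=
    le_max_right _ _
  have q1 : c - Real.sqrt 3 * s ≤ max (max (c - Real.sqrt 3 * s) (-(2*c))) (c + Real.sqrt 3 * s) :=
    le_trans (le_max_left _ _) (le_max_left _ _)
  have q2 : -(2*c) ≤ max (max (c - Real.sqrt 3 * s) (-(2*c))) (c + Real.sqrt 3 * s) :=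
    le_trans (le_max_right _ _) (le_max_left _ _)
  have q3 : c + Real.sqrt 3 * s ≤ max (max (c - Real.sqrt 3 * s) (-(2*c))) (c + Real.sqrt 3 * s) :=
    le_max_right _ _
  by_contra h
  push_neg at h
  have A1 : 2 * (Real.sqrt 3 * s) ≤ 2 := by linarith
  have A2 : -(2 * (Real.sqrt 3 * s)) ≤ 2 := by linarith
  have B1 : 3*c + Real.sqrt 3 * s ≤ 2 := by linarith
  have B2 : 3*c - Real.sqrt 3 * s ≤ 2 := by linarith
  have B3 : -(3*c) + Real.sqrt 3 * s ≤ 2 := by linarith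
  have B4 : -(3*c) - Real.sqrt 3 * s ≤ 2 := by linarith
  nlinarith [mul_nonneg (by linarith : (0:ℝ) ≤ 2 - (3*c + Real.sqrt 3 * s))
      (by linarith : (0:ℝ) ≤ 2 + 3*c - Real.sqrt 3 * s),
    mul_nonneg (by linarith : (0:ℝ) ≤ 2 - (3*c - Real.sqrt 3 * s))
      (by linarith : (0:ℝ) ≤ 2 + 3*c + Real.sqrt 3 * s),
    mul_nonneg (by linarith : (0:ℝ) ≤ 2 - 2 * (Real.sqrt 3 * s))
      (by linarith : (0:ℝ) ≤ 2 + 2 * (Real.sqrt 3 * s)), hpyth, h3]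
end

section
/- For every b > 0 and θ ∈ ℝ, the 9×9 matrix ϱ_{b,θ} is positive semidefinite, where ϱ_{b,θ} is the Hermitian matrix with diagonal (p_θ, 1/b, b, b, p_θ, 1/b, 1/b, b, p_θ), entries ϱ(1,5) = ϱ(5,9) = -e^{iθ}, ϱ(1,9) = -e^{-iθ}, ϱ(2,4) = ϱ(6,8) = -e^{-iθ}, ϱ(3,7) = -e^{iθ} (indices 1-based), conjugate-symmetric entries, and all other entries zero. -/
/-!
Up to a permutation of the basis, `ρ_{b,θ}` is the direct sum of the `3 × 3` circulant on the
indices `{1, 5, 9}` and three copies of the `2 × 2` block `[[1/b, -e^{-iθ}], [-e^{iθ}, b]]`.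
Each `2 × 2` block is `b⁻¹ u uᴴ` with `u = (1, -b e^{iθ})`. A circulant is diagonalised by the
discrete Fourier transform, so the circulant block is positive semidefinite as soon as its DFT
is nonnegative; its DFT values are `p_θ - 2 cos (θ + 2πk/3)`, `k = 0, 1, 2`, and `p_θ` is by
definition the largest of the three cosines.
-/

open Matrix Complex ComplexOrder

noncomputable def rho (b θ : ℝ) : Matrix (Fin 9) (Fin 9) ℂ :=
  let p : ℂ := (pTheta θ : ℂ)
  let e : ℂ := Complex.exp (θ * Complex.I)
  let f : ℂ := Complex.exp (-θ * Complex.I)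
  !![p, 0, 0, 0, -e, 0, 0, 0, -f;
     0, 1/(b:ℂ), 0, -f, 0, 0, 0, 0, 0;
     0, 0, (b:ℂ), 0, 0, 0, -e, 0, 0;
     0, -e, 0, (b:ℂ), 0, 0, 0, 0, 0;
     -f, 0, 0, 0, p, 0, 0, 0, -e;
     0, 0, 0, 0, 0, 1/(b:ℂ), 0, -f, 0;
     0, 0, -f, 0, 0, 0, 1/(b:ℂ), 0, 0;
     0, 0, 0, 0, 0, -e, 0, (b:ℂ), 0;
     -e, 0, 0, 0, -f, 0, 0, 0, p]

open ZMod

namespace Matrix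

variable {m n : Type*} [Fintype m] [Fintype n]

theorem PosSemidef.fromBlocks_zero {𝕜 : Type*} [RCLike 𝕜] {A : Matrix m m 𝕜} {D : Matrix n n 𝕜}
    (hA : A.PosSemidef) (hD : D.PosSemidef) : (fromBlocks A 0 0 D).PosSemidef := by
  rw [posSemidef_iff_dotProduct_mulVec] at hA hD ⊢
  refine ⟨hA.1.fromBlocks (by simp) hD.1, fun x => ?_⟩
  simpa [fromBlocks_mulVec, dotProduct, Fintype.sum_sum_type] using
    add_nonneg (hA.2 (x ∘ Sum.inl)) (hD.2 (x ∘ Sum.inr))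

theorem posSemidef_fin_two_of_mul_eq_norm_sq {a d : ℝ} {z : ℂ} (ha : 0 < a)
    (h : a * d = ‖z‖ ^ 2) : (!![(a : ℂ), star z; z, (d : ℂ)]).PosSemidef := by
  have hd : (d : ℂ) = (a : ℂ)⁻¹ * (z * star z) := by
    rw [RCLike.star_def, mul_conj, normSq_eq_norm_sq, ← h]; push_cast; field_simp
  have hrank : !![(a : ℂ), star z; z, (d : ℂ)]
      = (a⁻¹ : ℂ) • vecMulVec ![(a : ℂ), z] (star ![(a : ℂ), z]) := by
    ext i j
    rw [smul_apply, vecMulVec_apply]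
    have ha' : (a : ℂ) ≠ 0 := by exact_mod_cast ha.ne'
    fin_cases i <;> fin_cases j <;> simp [hd] <;> field_simp
  rw [hrank]
  exact (posSemidef_vecMulVec_self_star _).smul (by exact_mod_cast (inv_pos.2 ha).le)

variable {N : ℕ} [NeZero N]

theorem circulant_eq_sum_dft (v : ZMod N → ℂ) :
    circulant v = ∑ k, ((N : ℂ)⁻¹ * 𝓕 v k) •
      vecMulVec (fun j => stdAddChar (j * k)) (star fun j => stdAddChar (j * k)) := by
  ext i j
  have hinv := congrFun (dft.symm_apply_apply v) (i - j)
  rw [invDFT_apply] at hinv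
  simp only [circulant_apply, sum_apply, smul_apply, vecMulVec_apply, Pi.star_apply, smul_eq_mul]
  rw [← hinv, smul_eq_mul, Finset.mul_sum]
  refine Finset.sum_congr rfl fun k _ => ?_
  rw [RCLike.star_def, ← AddChar.map_neg_eq_conj, ← AddChar.map_add_eq_mul, smul_eq_mul]
  ring_nf

theorem posSemidef_circulant_of_dft_nonneg {v : ZMod N → ℂ} (hv : ∀ k, 0 ≤ 𝓕 v k) :
    (circulant v).PosSemidef := by
  rw [circulant_eq_sum_dft]
  refine posSemidef_sum _ fun k _ => (posSemidef_vecMulVec_self_star _).smul ?_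
  exact mul_nonneg (by positivity) (hv k)

end Matrix

namespace ZMod

variable {N : ℕ} [NeZero N]

theorem dft_single (a : ZMod N) (c : ℂ) (k : ZMod N) :
    𝓕 (Pi.single a c) k = stdAddChar (-(a * k)) * c := by
  simp [dft_apply, Pi.single_apply]

/-- The Hermitian circulant `p - (z̄ S + z S⁻¹)`, with `S` the cyclic shift on `ZMod N`. -/
noncomputable def cyclicTridiagonal (N : ℕ) (p : ℝ) (z : ℂ) : Matrix (ZMod N) (ZMod N) ℂ :=
  circulant (Pi.single 0 (p : ℂ) - Pi.single 1 (star z) - Pi.single (-1) z)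

theorem posSemidef_cyclicTridiagonal {p : ℝ} {z : ℂ}
    (h : ∀ k : ZMod N, 2 * (z * stdAddChar k).re ≤ p) : (cyclicTridiagonal N p z).PosSemidef := by
  refine posSemidef_circulant_of_dft_nonneg fun k => ?_
  have hdft : 𝓕 (Pi.single 0 (p : ℂ) - Pi.single 1 (star z) - Pi.single (-1) z) k
      = ((p - 2 * (z * stdAddChar k).re : ℝ) : ℂ) := by
    simp only [map_sub, Pi.sub_apply, dft_single, zero_mul, neg_zero, AddChar.map_zero_eq_one,
      one_mul, neg_mul, neg_neg, AddChar.map_neg_eq_conj]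
    have hconj : (starRingEnd ℂ) (stdAddChar k) * star z + stdAddChar k * z
        = z * stdAddChar k + (starRingEnd ℂ) (z * stdAddChar k) := by
      rw [map_mul, RCLike.star_def]; ring
    rw [sub_sub, hconj, add_conj]
    push_cast; ring
  rw [hdft]
  exact_mod_cast sub_nonneg.2 (h k)

theorem re_exp_mul_stdAddChar (θ : ℝ) (k : ZMod N) :
    (exp (θ * I) * stdAddChar k).re = Real.cos (θ + 2 * Real.pi * k.val / N) := by
  rw [stdAddChar_apply, toCircle_apply, ← Complex.exp_add]
  convert exp_ofReal_mul_I_re (θ + 2 * Real.pi * k.val / N) using 3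
  push_cast; ring

end ZMod

theorem two_cos_le_pTheta (θ : ℝ) (k : ZMod 3) :
    2 * Real.cos (θ + 2 * Real.pi * k.val / 3) ≤ pTheta θ := by
  unfold pTheta
  fin_cases k
  · simp [ZMod.val]
  · simp [ZMod.val, mul_div_assoc]
  · have : Real.cos (θ + 2 * Real.pi * 2 / 3) = Real.cos (θ - 2 * Real.pi / 3) := by
      rw [← Real.cos_add_two_pi (θ - _)]; ring_nf
    simp [ZMod.val, this]

/-- Indices are 0-based: `0, 4, 8` (the paper's `1, 5, 9`) go to the circulant block, and the
pairs `(1, 3)`, `(6, 2)`, `(5, 7)`, in this order, to the three `2 × 2` blocks. -/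
def rhoBlockIndex : Fin 9 → ZMod 3 ⊕ Fin 2 ⊕ Fin 2 ⊕ Fin 2 :=
  ![.inl 0, .inr (.inl 0), .inr (.inr (.inl 1)), .inr (.inl 1), .inl 1,
    .inr (.inr (.inr 0)), .inr (.inr (.inl 0)), .inr (.inr (.inr 1)), .inl 2]

noncomputable def rhoPairBlock (b θ : ℝ) : Matrix (Fin 2) (Fin 2) ℂ :=
  !![((b⁻¹ : ℝ) : ℂ), star (-exp (θ * I)); -exp (θ * I), (b : ℂ)]

theorem rho_eq_submatrix (b θ : ℝ) :
    rho b θ = (fromBlocks (cyclicTridiagonal 3 (pTheta θ) (exp (θ * I))) 0 0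
      (fromBlocks (rhoPairBlock b θ) 0 0 (fromBlocks (rhoPairBlock b θ) 0 0 (rhoPairBlock b θ)))
      ).submatrix rhoBlockIndex rhoBlockIndex := by
  have hstar : star (exp (θ * I)) = exp (-θ * I) := by
    rw [RCLike.star_def, ← Complex.exp_conj]; simp
  ext i j
  fin_cases i <;> fin_cases j <;>
    simp +decide [rho, rhoBlockIndex, rhoPairBlock, cyclicTridiagonal, hstar, circulant_apply,
      Pi.single_apply]

theorem posSemidef_rhoPairBlock {b : ℝ} (hb : 0 < b) (θ : ℝ) : (rhoPairBlock b θ).PosSemidef :=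
  posSemidef_fin_two_of_mul_eq_norm_sq (inv_pos.2 hb) (by simp [norm_exp_ofReal_mul_I, hb.ne'])

theorem stmt4 (b θ : ℝ) (hb : 0 < b) : (rho b θ).PosSemidef := by
  have hcirc : (cyclicTridiagonal 3 (pTheta θ) (exp (θ * I))).PosSemidef :=
    posSemidef_cyclicTridiagonal fun k => by
      rw [re_exp_mul_stdAddChar]; exact two_cos_le_pTheta θ k
  have hpair := posSemidef_rhoPairBlock hb θ
  rw [rho_eq_submatrix]
  exact (hcirc.fromBlocks_zero (hpair.fromBlocks_zero (hpair.fromBlocks_zero hpair))).submatrix _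
end

section
/- For every b > 0 and θ ∈ ℝ, the partial transpose of ϱ_{b,θ} equals ϱ_{b,θ} itself; in particular ϱ_{b,θ} is a PPT matrix (both ϱ_{b,θ} and its partial transpose are positive semidefinite). -/
open Matrix Complex ComplexOrder

noncomputable def partialTranspose (ρ : Matrix (Fin 9) (Fin 9) ℂ) : Matrix (Fin 9) (Fin 9) ℂ :=
  Matrix.of fun i j =>
    ρ (finProdFinEquiv (((finProdFinEquiv (m := 3) (n := 3)).symm j).1,
        ((finProdFinEquiv (m := 3) (n := 3)).symm i).2))
      (finProdFinEquiv (((finProdFinEquiv (m := 3) (n := 3)).symm i).1,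
        ((finProdFinEquiv (m := 3) (n := 3)).symm j).2))

/-! The matrix is unchanged by the partial transpose, which is checked entrywise. Up to a
permutation of the basis, `ρ` is the direct sum of a 3 × 3 circulant on `e₀, e₄, e₈` and three
copies of the 2 × 2 block `[[1/b, -e^{-iθ}], [-e^{iθ}, b]] = b⁻¹ v v*` with `v = (1, -b e^{iθ})`.
The circulant is diagonalised by the discrete Fourier transform, with eigenvalues
`p_θ - 2 cos (θ + 2πk/3)`, and `p_θ` is precisely the largest of the numbers `2 cos (θ + 2πk/3)`. -/

lemma IsPrimitiveRoot.sq_add_self_add_one {w : ℂ} (hw : IsPrimitiveRoot w 3) :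
    w ^ 2 + w + 1 = 0 := by
  have h := hw.geom_sum_eq_zero (by norm_num)
  simp only [Finset.sum_range_succ, Finset.sum_range_zero] at h
  linear_combination h

lemma IsPrimitiveRoot.star_eq_sq {w : ℂ} (hw : IsPrimitiveRoot w 3) : star w = w ^ 2 := by
  have hnorm : star w * w = 1 := by
    rw [Complex.star_def, Complex.conj_mul', hw.norm'_eq_one (by norm_num)]; norm_num
  linear_combination (-star w) * hw.pow_eq_one + w ^ 2 * hnorm

lemma zero_le_add_add_star_mul_star_mul_self {p : ℝ} {d : ℂ} (hd : 0 ≤ p + 2 * d.re) (u : ℂ) :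
    0 ≤ (p + (d + star d)) * (star u * u) := by
  rw [Complex.star_def, Complex.add_conj, ← Complex.normSq_eq_conj_mul_self]
  exact_mod_cast mul_nonneg hd (Complex.normSq_nonneg u)

lemma posSemidef_circulant_fin_three {p : ℝ} {c w : ℂ} (hw : IsPrimitiveRoot w 3)
    (hc : ∀ k < 3, 0 ≤ p + 2 * (c * w ^ k).re) :
    (circulant ![(p : ℂ), star c, c]).PosSemidef := by
  refine .of_dotProduct_mulVec_nonneg ?_ fun x ↦ ?_
  · ext i j
    fin_cases i <;> fin_cases j <;> simp [circulant_apply]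
  -- `u k` is the `k`-th Fourier coefficient of `x`, with eigenvalue `p + 2 Re (c w ^ k)`.
  let u (k : ℕ) : ℂ := x 0 + w ^ (2 * k) * x 1 + w ^ k * x 2
  have hsum :
      0 ≤ ∑ k ∈ Finset.range 3, (p + (c * w ^ k + star (c * w ^ k))) * (star (u k) * u k) :=
    Finset.sum_nonneg fun k hk ↦
      zero_le_add_add_star_mul_star_mul_self (hc k (Finset.mem_range.mp hk)) (u k)
  have hform : star x ⬝ᵥ (circulant ![(p : ℂ), star c, c] *ᵥ x) = 3⁻¹ *
      ∑ k ∈ Finset.range 3, (p + (c * w ^ k + star (c * w ^ k))) * (star (u k) * u k) := by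
    simp only [u, Finset.sum_range_succ, Finset.sum_range_zero, star_add, star_mul', star_pow,
      hw.star_eq_sq]
    simp [dotProduct, mulVec, Fin.sum_univ_three, circulant_apply]
    grind [hw.sq_add_self_add_one]
  rw [hform]
  exact mul_nonneg (by positivity) hsum

noncomputable def pairBlock (b : ℝ) (z : ℂ) : Matrix (Fin 2) (Fin 2) ℂ :=
  !![1 / (b : ℂ), -star z; -z, (b : ℂ)]

lemma pairBlock_eq_smul_vecMulVec {b : ℝ} (hb : b ≠ 0) {z : ℂ} (hz : ‖z‖ = 1) :
    pairBlock b z = (b : ℂ)⁻¹ • vecMulVec ![1, -b * z] (star ![1, -b * z]) := by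
  have hz' : z * starRingEnd ℂ z = 1 := by
    rw [Complex.mul_conj', hz]; norm_num
  have hb' : (b : ℂ) ≠ 0 := by exact_mod_cast hb
  ext i j
  fin_cases i <;> fin_cases j <;> simp [pairBlock, vecMulVec, hb']
  grind

lemma posSemidef_pairBlock {b : ℝ} (hb : 0 < b) {z : ℂ} (hz : ‖z‖ = 1) :
    (pairBlock b z).PosSemidef := by
  rw [pairBlock_eq_smul_vecMulVec hb.ne' hz]
  exact (posSemidef_vecMulVec_self_star _).smul (by positivity)

lemma star_exp_ofReal_mul_I (θ : ℝ) : star (exp (θ * I)) = exp (-θ * I) := by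
  rw [Complex.star_def, ← Complex.exp_conj]; simp

lemma re_exp_ofReal_mul_I_mul_exp_pow (θ : ℝ) (k : ℕ) :
    (exp (θ * I) * exp (2 * Real.pi * I / 3) ^ k).re = Real.cos (θ + 2 * Real.pi * k / 3) := by
  rw [← Complex.exp_nat_mul, ← Complex.exp_add, ← Complex.exp_ofReal_mul_I_re]
  congr 2
  push_cast; ring

lemma two_mul_cos_le_pTheta (θ : ℝ) {k : ℕ} (hk : k < 3) :
    2 * Real.cos (θ + 2 * Real.pi * k / 3) ≤ pTheta θ := by
  unfold pTheta
  interval_cases k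
  · simp
  · simp
  · rw [show θ + 2 * Real.pi * (2 : ℕ) / 3 = θ - 2 * Real.pi / 3 + 2 * Real.pi by push_cast; ring,
      Real.cos_add_two_pi]
    simp

lemma dotProduct_rho_mulVec (b θ : ℝ) (x : Fin 9 → ℂ) :
    star x ⬝ᵥ (rho b θ *ᵥ x) =
      star ![x 0, x 4, x 8] ⬝ᵥ
          (circulant ![(pTheta θ : ℂ), star (-exp (θ * I)), -exp (θ * I)] *ᵥ ![x 0, x 4, x 8]) +
        star ![x 1, x 3] ⬝ᵥ (pairBlock b (exp (θ * I)) *ᵥ ![x 1, x 3]) +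
        star ![x 6, x 2] ⬝ᵥ (pairBlock b (exp (θ * I)) *ᵥ ![x 6, x 2]) +
        star ![x 5, x 7] ⬝ᵥ (pairBlock b (exp (θ * I)) *ᵥ ![x 5, x 7]) := by
  simp only [rho, pairBlock, ← star_exp_ofReal_mul_I]
  simp [dotProduct, mulVec, Fin.sum_univ_succ, circulant_apply]
  ring

lemma isHermitian_rho (b θ : ℝ) : (rho b θ).IsHermitian := by
  ext i j
  fin_cases i <;> fin_cases j <;> simp [rho, ← Complex.exp_conj]

lemma posSemidef_rho {b : ℝ} (hb : 0 < b) (θ : ℝ) : (rho b θ).PosSemidef := by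
  have hC : (circulant ![(pTheta θ : ℂ), star (-exp (θ * I)), -exp (θ * I)]).PosSemidef := by
    refine posSemidef_circulant_fin_three (Complex.isPrimitiveRoot_exp 3 (by norm_num))
      fun k hk ↦ ?_
    rw [neg_mul, Complex.neg_re, Nat.cast_ofNat, re_exp_ofReal_mul_I_mul_exp_pow]
    linarith [two_mul_cos_le_pTheta θ hk]
  have hB := posSemidef_pairBlock hb (Complex.norm_exp_ofReal_mul_I θ)
  refine .of_dotProduct_mulVec_nonneg (isHermitian_rho b θ) fun x ↦ ?_
  rw [dotProduct_rho_mulVec]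
  exact add_nonneg (add_nonneg (add_nonneg (hC.dotProduct_mulVec_nonneg _)
    (hB.dotProduct_mulVec_nonneg _)) (hB.dotProduct_mulVec_nonneg _))
    (hB.dotProduct_mulVec_nonneg _)

lemma partialTranspose_rho (b θ : ℝ) : partialTranspose (rho b θ) = rho b θ := by
  ext i j
  fin_cases i <;> fin_cases j <;> rfl

theorem stmt5 (b θ : ℝ) (hb : 0 < b) :
    partialTranspose (rho b θ) = rho b θ ∧
      (rho b θ).PosSemidef ∧ (partialTranspose (rho b θ)).PosSemidef := by
  rw [partialTranspose_rho]
  exact ⟨rfl, posSemidef_rho hb θ, posSemidef_rho hb θ⟩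
end

section
/- For each b > 0 and θ ∈ ℝ, the three vectors w₁ = (0,b,0; e^{iθ},0,0; 0,0,0), w₂ = (0,0,0; 0,0,b; 0,e^{iθ},0), w₃ = (0,0,e^{iθ}; 0,0,0; b,0,0) in ℂ⁹ lie in the kernel of ϱ_{b,θ}. -/
open Matrix Complex

theorem stmt7 (b θ : ℝ) (hb : 0 < b) :
    (rho b θ).mulVec ![0, (b : ℂ), 0, Complex.exp (θ * Complex.I), 0, 0, 0, 0, 0] = 0 ∧
    (rho b θ).mulVec ![0, 0, 0, 0, 0, (b : ℂ), 0, Complex.exp (θ * Complex.I), 0] = 0 ∧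
    (rho b θ).mulVec ![0, 0, Complex.exp (θ * Complex.I), 0, 0, 0, (b : ℂ), 0, 0] = 0 := by
  have hb' : (b : ℂ) ≠ 0 := by exact_mod_cast hb.ne'
  -- Each vector is supported on one 2×2 block [[1/b, -e^{-iθ}], [-e^{iθ}, b]] of ϱ, whose
  -- determinant 1 - e^{-iθ} e^{iθ} vanishes.
  refine ⟨?_, ?_, ?_⟩ <;>
  · ext i
    fin_cases i <;>
      simp [rho, mulVec, dotProduct, Fin.sum_univ_succ, hb', Complex.exp_neg, mul_comm]
end

section
/- If π/3 < θ < π, then the vector w₊ = (1,0,0; 0,e^{-2πi/3},0; 0,0,e^{2πi/3}) lies in the kernel of ϱ_{b,θ} for every b > 0. -/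
open Matrix Complex

/-! On the indices `{0, 4, 8}` the matrix `rho b θ` is the circulant with first row
`(p, -e, -e⁻¹)`, `e = exp (θ i)`, so `(1, ζ⁻¹, ζ)` is in its kernel for a cube root of unity `ζ`
exactly when `p = e ζ⁻¹ + e⁻¹ ζ = 2 cos (θ - arg ζ)`; and the other rows vanish on that support.
For `π/3 < θ < π` the maximum defining `pTheta θ` is attained at `2 cos (θ - 2π/3)`, which is
this value for `ζ = exp (2πi/3)`. -/

lemma pTheta_eq_two_cos_sub (θ : ℝ) (h1 : Real.pi / 3 < θ) (h2 : θ < Real.pi) :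
    pTheta θ = 2 * Real.cos (θ - 2 * Real.pi / 3) := by
  have hsin : 0 < Real.sin θ := Real.sin_pos_of_pos_of_lt_pi (by linarith [Real.pi_pos]) h2
  have hsin' : 0 < Real.sin (θ - Real.pi / 3) :=
    Real.sin_pos_of_pos_of_lt_pi (by linarith) (by linarith)
  have hsin_pi_div_three : 0 < Real.sin (Real.pi / 3) := by
    rw [Real.sin_pi_div_three]; positivity
  have hsin_two_pi_div_three : 0 < Real.sin (2 * Real.pi / 3) :=
    Real.sin_pos_of_pos_of_lt_pi (by linarith [Real.pi_pos]) (by linarith [Real.pi_pos])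
  have hcos : Real.cos θ < Real.cos (θ - 2 * Real.pi / 3) := by
    have := Real.cos_sub_cos (θ - 2 * Real.pi / 3) θ
    rw [show (θ - 2 * Real.pi / 3 + θ) / 2 = θ - Real.pi / 3 by ring,
      show (θ - 2 * Real.pi / 3 - θ) / 2 = -(Real.pi / 3) by ring, Real.sin_neg] at this
    nlinarith
  have hcos' : Real.cos (θ + 2 * Real.pi / 3) < Real.cos (θ - 2 * Real.pi / 3) := by
    have := Real.cos_sub_cos (θ - 2 * Real.pi / 3) (θ + 2 * Real.pi / 3)
    rw [show (θ - 2 * Real.pi / 3 + (θ + 2 * Real.pi / 3)) / 2 = θ by ring,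
      show (θ - 2 * Real.pi / 3 - (θ + 2 * Real.pi / 3)) / 2 = -(2 * Real.pi / 3) by ring,
      Real.sin_neg] at this
    nlinarith
  rw [pTheta, max_eq_left (by linarith : 2 * Real.cos θ ≤ 2 * Real.cos (θ - 2 * Real.pi / 3)),
    max_eq_left (by linarith)]

lemma rho_mulVec_eq_zero_of_pow_three_eq_one (b θ : ℝ) {ζ : ℂ} (hζ : ζ ^ 3 = 1)
    (hp : (pTheta θ : ℂ) = exp (θ * I) * ζ⁻¹ + exp (-θ * I) * ζ) :
    (rho b θ).mulVec ![1, 0, 0, 0, ζ⁻¹, 0, 0, 0, ζ] = 0 := by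
  have hζinv : ζ⁻¹ = ζ ^ 2 := inv_eq_of_mul_eq_one_right (by rw [← pow_succ', hζ])
  rw [rho, hp, hζinv]
  simp only [cons_mulVec, cons_dotProduct, dotProduct_of_isEmpty, head_cons, tail_cons,
    empty_mulVec, add_zero, mul_zero, mul_one, zero_mul, zero_add, cons_eq_zero_iff,
    zero_empty, and_true, true_and]
  refine ⟨by ring, ?_, ?_⟩
  · linear_combination (exp (θ * I) * ζ + exp (-θ * I)) * hζ
  · linear_combination exp (θ * I) * hζ

theorem stmt9_general (b θ : ℝ) (h1 : Real.pi / 3 < θ) (h2 : θ < Real.pi) :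
    (rho b θ).mulVec
      ![1, 0, 0, 0, Complex.exp (-(2 * Real.pi / 3) * Complex.I), 0, 0, 0,
        Complex.exp ((2 * Real.pi / 3) * Complex.I)] = 0 := by
  set ω : ℂ := exp (2 * Real.pi / 3 * I) with hω
  have hω3 : ω ^ 3 = 1 := by
    simpa [hω, mul_div_right_comm] using (isPrimitiveRoot_exp 3 (by norm_num)).pow_eq_one
  have hωinv : exp (-(2 * Real.pi / 3) * I) = ω⁻¹ := by rw [hω, ← exp_neg, neg_mul]
  have hp : (pTheta θ : ℂ) = exp (θ * I) * ω⁻¹ + exp (-θ * I) * ω := by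
    rw [pTheta_eq_two_cos_sub θ h1 h2]
    push_cast
    rw [two_cos, ← hωinv, hω, ← exp_add, ← exp_add]
    ring_nf
  rw [hωinv]
  exact rho_mulVec_eq_zero_of_pow_three_eq_one b θ hω3 hp

theorem stmt9 (b θ : ℝ) (hb : 0 < b) (h1 : Real.pi / 3 < θ) (h2 : θ < Real.pi) :
    (rho b θ).mulVec
      ![1, 0, 0, 0, Complex.exp (-(2 * Real.pi / 3) * Complex.I), 0, 0, 0,
        Complex.exp ((2 * Real.pi / 3) * Complex.I)] = 0 :=
  stmt9_general b θ h1 h2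
end

section
/- For every θ ∉ {nπ/3 : n ∈ ℤ} and b > 0, the matrix ϱ_{b,θ} has rank exactly 5 (equivalently, its kernel is exactly 4-dimensional, spanned by w₁, w₂, w₃ and the appropriate vector w₋, w₀, or w₊). -/
/-!
After permuting the indices, `rho b θ` is block diagonal: a Hermitian circulant block on the
indices `0, 4, 8` and three `2 × 2` blocks on `{1, 3}`, `{2, 6}`, `{5, 7}`, each of determinant
`1 - e f = 0` with `e = exp (θ i)`, `f = exp (-θ i)`. The eigenvalues of the circulant block are
`pTheta θ - 2 cos (θ - 2πk/3)`, and `pTheta θ` is by definition one of these cosines, so the block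
is singular, with kernel vector `(1, ζ², ζ)` for a cube root of unity `ζ`. This gives four
independent kernel vectors, hence rank `≤ 5`. Conversely the `5 × 5` minor on `1, 2, 5, 0, 4`
equals `(pTheta θ ^ 2 - 1) / b`, and `pTheta θ > 1` unless `θ` is an odd multiple of `π / 3`.
-/

open Matrix Complex
open scoped Real

theorem Matrix.le_rank_of_det_submatrix_ne_zero {K m n : Type*} [Field K] [Fintype n] {k : ℕ}
    (A : Matrix m n K) (r : Fin k → m) (c : Fin k → n) (h : (A.submatrix r c).det ≠ 0) :
    k ≤ A.rank := by
  simpa [rank_of_det_ne_zero h] using rank_submatrix_le A r c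

lemma pTheta_periodic : Function.Periodic pTheta (2 * π / 3) := by
  intro θ
  have hcos : Real.cos (θ + 2 * π / 3 + 2 * π / 3) = Real.cos (θ - 2 * π / 3) := by
    rw [← Real.cos_add_two_pi (θ - 2 * π / 3)]
    ring_nf
  simp only [pTheta, add_sub_cancel_right, hcos]
  rw [max_comm, ← max_assoc]

lemma one_lt_pTheta {θ : ℝ} (hθ : ∀ n : ℤ, θ ≠ n * π / 3) : 1 < pTheta θ := by
  have hper : 0 < 2 * π / 3 := by positivity
  set y := toIcoMod hper (-(π / 3)) θ
  obtain ⟨hy_ge, hy_lt⟩ := toIcoMod_mem_Ico hper (-(π / 3)) θ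
  have hshift : θ - toIcoDiv hper (-(π / 3)) θ • (2 * π / 3) = y := self_sub_toIcoDiv_zsmul ..
  have hy_ne : y ≠ -(π / 3) := by
    intro h
    apply hθ (2 * toIcoDiv hper (-(π / 3)) θ - 1)
    rw [h, zsmul_eq_mul] at hshift
    push_cast
    linarith
  have hy_abs : |y| < π / 3 := abs_lt.mpr ⟨lt_of_le_of_ne hy_ge (Ne.symm hy_ne), by linarith⟩
  have hcos : 1 / 2 < Real.cos y := by
    rw [← Real.cos_abs, ← Real.cos_pi_div_three]
    exact Real.cos_lt_cos_of_nonneg_of_le_pi (abs_nonneg _) (by linarith [Real.pi_pos]) hy_abs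
  calc 1 < 2 * Real.cos y := by linarith
    _ ≤ pTheta y := (le_max_right _ _).trans (le_max_left _ _)
    _ = pTheta θ := by rw [← hshift, pTheta_periodic.sub_zsmul_eq]

lemma two_cos_eq_exp_mul_sq_add (θ : ℝ) (k : ℤ) :
    ((2 * Real.cos (θ - 2 * π * k / 3) : ℝ) : ℂ) =
      exp (θ * I) * exp (2 * π * k / 3 * I) ^ 2 + exp (-θ * I) * exp (2 * π * k / 3 * I) := by
  have hshift : θ * I + (2 : ℕ) * (2 * π * k / 3 * I) =
      (θ - 2 * π * k / 3) * I + k * (2 * π * I) := by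
    push_cast
    ring
  push_cast
  rw [two_cos, ← Complex.exp_nat_mul, ← Complex.exp_add, ← Complex.exp_add, hshift,
    Complex.exp_add, exp_int_mul_two_pi_mul_I, mul_one]
  ring_nf

lemma exists_pTheta_eq (θ : ℝ) :
    ∃ ζ : ℂ, ζ ^ 3 = 1 ∧ (pTheta θ : ℂ) = exp (θ * I) * ζ ^ 2 + exp (-θ * I) * ζ := by
  suffices ∃ k : ℤ, pTheta θ = 2 * Real.cos (θ - 2 * π * k / 3) by
    obtain ⟨k, hk⟩ := this
    refine ⟨exp (2 * π * k / 3 * I), ?_, by rw [hk, two_cos_eq_exp_mul_sq_add]⟩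
    rw [← Complex.exp_nat_mul, ← exp_int_mul_two_pi_mul_I k]
    push_cast
    ring_nf
  rcases max_choice (max (2 * Real.cos (θ - 2 * π / 3)) (2 * Real.cos θ))
      (2 * Real.cos (θ + 2 * π / 3)) with h | h <;> rw [pTheta, h]
  · rcases max_choice (2 * Real.cos (θ - 2 * π / 3)) (2 * Real.cos θ) with h' | h' <;> rw [h']
    · exact ⟨1, by push_cast; ring_nf⟩
    · exact ⟨0, by push_cast; ring_nf⟩
  · exact ⟨-1, by push_cast; ring_nf⟩

lemma exp_mul_I_mul_exp_neg_mul_I (θ : ℝ) : exp (θ * I) * exp (-(θ * I)) = 1 := by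
  rw [← Complex.exp_add, add_neg_cancel, Complex.exp_zero]

/-- The first column is `w₊`, `w₀` or `w₋` according as `ζ` is `e^{2πi/3}`, `1` or `e^{-2πi/3}`;
the other three span the kernels of the `2 × 2` blocks. -/
noncomputable def rhoKernel (b θ : ℝ) (ζ : ℂ) : Matrix (Fin 9) (Fin 4) ℂ :=
  let e : ℂ := exp (θ * I)
  let f : ℂ := exp (-θ * I)
  !![1, 0, 0, 0;
     0, b * f, 0, 0;
     0, 0, e, 0;
     0, 1, 0, 0;
     ζ ^ 2, 0, 0, 0;
     0, 0, 0, b * f;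
     0, 0, b, 0;
     0, 0, 0, 1;
     ζ, 0, 0, 0]

lemma rho_mul_rhoKernel {b θ : ℝ} {ζ : ℂ} (hb : b ≠ 0) (hζ : ζ ^ 3 = 1)
    (hp : (pTheta θ : ℂ) = exp (θ * I) * ζ ^ 2 + exp (-θ * I) * ζ) :
    rho b θ * rhoKernel b θ ζ = 0 := by
  have hef := exp_mul_I_mul_exp_neg_mul_I θ
  have hb' : (b : ℂ) ≠ 0 := ofReal_ne_zero.mpr hb
  ext i j
  fin_cases i <;> fin_cases j <;>
    simp [rho, rhoKernel, mul_apply, Fin.sum_univ_succ, hp, hb'] <;>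
    grind

lemma four_le_rank_rhoKernel {b θ : ℝ} (ζ : ℂ) (hb : b ≠ 0) : 4 ≤ (rhoKernel b θ ζ).rank := by
  apply le_rank_of_det_submatrix_ne_zero _ ![0, 3, 6, 7] id
  have hdiag : (rhoKernel b θ ζ).submatrix ![0, 3, 6, 7] id = diagonal ![1, 1, (b : ℂ), 1] := by
    ext i j
    fin_cases i <;> fin_cases j <;> rfl
  simp [hdiag, Fin.prod_univ_succ, hb]

lemma rank_rho_le_five {b θ : ℝ} (hb : b ≠ 0) : (rho b θ).rank ≤ 5 := by
  obtain ⟨ζ, hζ, hp⟩ := exists_pTheta_eq θ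
  have hsum := rank_add_rank_le_card_of_mul_eq_zero (rho_mul_rhoKernel hb hζ hp)
  have hker := four_le_rank_rhoKernel (θ := θ) ζ hb
  simp only [Fintype.card_fin] at hsum
  omega

lemma det_rho_submatrix {b θ : ℝ} (hb : b ≠ 0) :
    ((rho b θ).submatrix ![1, 2, 5, 0, 4] ![1, 2, 5, 0, 4]).det =
      ((pTheta θ : ℂ) ^ 2 - 1) / b := by
  have hb' : (b : ℂ) ≠ 0 := ofReal_ne_zero.mpr hb
  have hblock : (rho b θ).submatrix ![1, 2, 5, 0, 4] ![1, 2, 5, 0, 4] =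
      !![1 / (b : ℂ), 0, 0, 0, 0;
         0, (b : ℂ), 0, 0, 0;
         0, 0, 1 / (b : ℂ), 0, 0;
         0, 0, 0, (pTheta θ : ℂ), -exp (θ * I);
         0, 0, 0, -exp (-θ * I), (pTheta θ : ℂ)] := by
    ext i j
    fin_cases i <;> fin_cases j <;> rfl
  rw [hblock]
  simp [det_succ_row_zero, Fin.sum_univ_succ, exp_mul_I_mul_exp_neg_mul_I]
  field_simp
  ring

lemma five_le_rank_rho {b θ : ℝ} (hb : b ≠ 0) (hp : pTheta θ ^ 2 ≠ 1) : 5 ≤ (rho b θ).rank := by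
  apply le_rank_of_det_submatrix_ne_zero _ ![1, 2, 5, 0, 4] ![1, 2, 5, 0, 4]
  rw [det_rho_submatrix hb]
  refine div_ne_zero (sub_ne_zero.mpr ?_) (ofReal_ne_zero.mpr hb)
  exact_mod_cast hp

theorem stmt10 (b θ : ℝ) (hb : 0 < b) (hθ : ∀ n : ℤ, θ ≠ n * Real.pi / 3) :
    (rho b θ).rank = 5 :=
  le_antisymm (rank_rho_le_five hb.ne')
    (five_le_rank_rho hb.ne' (one_lt_pow₀ (one_lt_pTheta hθ) two_ne_zero).ne')
end

section
/- For every θ ∈ ℝ there exists b > 0 such that ϱ_{b,θ} + ϱ_{1/b, θ+π} is a positive scalar multiple of the 9×9 identity matrix. -/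
open Matrix Complex

lemma cos_two_pi_div_three' : Real.cos (2 * Real.pi / 3) = -(1/2) := by
  have h : (2 * Real.pi / 3) = Real.pi - Real.pi / 3 := by ring
  rw [h, Real.cos_pi_sub, Real.cos_pi_div_three]

lemma sin_two_pi_div_three' : Real.sin (2 * Real.pi / 3) = Real.sqrt 3 / 2 := by
  have h : (2 * Real.pi / 3) = Real.pi - Real.pi / 3 := by ring
  rw [h, Real.sin_pi_sub, Real.sin_pi_div_three]

lemma pSum_ge_two (θ : ℝ) : 2 ≤ pTheta θ + pTheta (θ + Real.pi) := by
  set c := Real.cos θ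
  set t := Real.sin θ
  set r3 := Real.sqrt 3
  have hr3 : r3 ^ 2 = 3 := Real.sq_sqrt (by norm_num)
  have hct : c ^ 2 + t ^ 2 = 1 := Real.cos_sq_add_sin_sq θ
  have h1 : Real.cos (θ - 2 * Real.pi / 3) = -c/2 + r3/2 * t := by
    rw [Real.cos_sub, cos_two_pi_div_three', sin_two_pi_div_three']; ring
  have h2 : Real.cos (θ + 2 * Real.pi / 3) = -c/2 - r3/2 * t := by
    rw [Real.cos_add, cos_two_pi_div_three', sin_two_pi_div_three']; ring
  have h3 : Real.cos (θ + Real.pi - 2 * Real.pi / 3) = c/2 - r3/2 * t := by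
    rw [show θ + Real.pi - 2 * Real.pi / 3 = (θ - 2*Real.pi/3) + Real.pi by ring,
      Real.cos_add_pi, h1]; ring
  have h4 : Real.cos (θ + Real.pi + 2 * Real.pi / 3) = c/2 + r3/2 * t := by
    rw [show θ + Real.pi + 2 * Real.pi / 3 = (θ + 2*Real.pi/3) + Real.pi by ring,
      Real.cos_add_pi, h2]; ring
  have h5 : Real.cos (θ + Real.pi) = -c := Real.cos_add_pi θ
  have A1 : 2 * (-c/2 + r3/2 * t) ≤ pTheta θ := by
    rw [← h1]; exact le_trans (le_max_left _ _) (le_max_left _ _)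
  have A2 : 2 * c ≤ pTheta θ := le_trans (le_max_right _ _) (le_max_left _ _)
  have A3 : 2 * (-c/2 - r3/2 * t) ≤ pTheta θ := by
    rw [← h2]; exact le_max_right _ _
  have B1 : 2 * (c/2 - r3/2 * t) ≤ pTheta (θ + Real.pi) := by
    rw [← h3]; exact le_trans (le_max_left _ _) (le_max_left _ _)
  have B2 : 2 * (-c) ≤ pTheta (θ + Real.pi) := by
    rw [← h5]; exact le_trans (le_max_right _ _) (le_max_left _ _)
  have B3 : 2 * (c/2 + r3/2 * t) ≤ pTheta (θ + Real.pi) := by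
    rw [← h4]; exact le_max_right _ _
  nlinarith [Real.sqrt_nonneg 3, sq_nonneg (c - t), sq_nonneg (c + t),
    add_le_add A2 B3, add_le_add A2 B1, add_le_add A1 B2, add_le_add A3 B2,
    add_le_add A1 B3, add_le_add A3 B1]

lemma one9 : (1 : Matrix (Fin 9) (Fin 9) ℂ) =
    !![1,0,0,0,0,0,0,0,0;
       0,1,0,0,0,0,0,0,0;
       0,0,1,0,0,0,0,0,0;
       0,0,0,1,0,0,0,0,0;
       0,0,0,0,1,0,0,0,0;
       0,0,0,0,0,1,0,0,0;
       0,0,0,0,0,0,1,0,0;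
       0,0,0,0,0,0,0,1,0;
       0,0,0,0,0,0,0,0,1] := by
  ext i j
  fin_cases i <;> fin_cases j <;> simp [Matrix.one_apply] <;> rfl

lemma rho_key (b θ S : ℝ)
    (hinv : 1 / ((1 / b : ℝ) : ℂ) = (b : ℂ))
    (hinvC : ((1 / b : ℝ) : ℂ) = 1 / (b : ℂ))
    (hbeqC : (b : ℂ) + ((b : ℂ))⁻¹ = (S : ℂ))
    (hbeqC' : ((b : ℂ))⁻¹ + (b : ℂ) = (S : ℂ))
    (hE : Complex.exp (((θ:ℂ) + (Real.pi:ℂ)) * Complex.I) = -Complex.exp ((θ : ℂ) * Complex.I))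
    (hE' : Complex.exp ((-(Real.pi:ℂ) + -(θ:ℂ)) * Complex.I)
      = -Complex.exp (-((θ : ℂ) * Complex.I)))
    (hP : ((pTheta θ : ℝ) : ℂ) + ((pTheta (θ + Real.pi) : ℝ) : ℂ) = (S : ℂ)) :
    rho b θ + rho (1 / b) (θ + Real.pi) = (S : ℂ) • (1 : Matrix (Fin 9) (Fin 9) ℂ) := by
  rw [one9]
  simp [rho, hE, hE', hinv, hinvC, hP, hbeqC, hbeqC', Matrix.of_add_of, smul_eq_mul]

theorem stmt13 (θ : ℝ) :
    ∃ b : ℝ, 0 < b ∧ ∃ r : ℝ, 0 < r ∧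
      rho b θ + rho (1 / b) (θ + Real.pi) = (r : ℂ) • (1 : Matrix (Fin 9) (Fin 9) ℂ) := by
  set S := pTheta θ + pTheta (θ + Real.pi) with hSdef
  have hS : 2 ≤ S := pSum_ge_two θ
  set b := (S + Real.sqrt (S ^ 2 - 4)) / 2 with hbdef
  have hsq : Real.sqrt (S ^ 2 - 4) ^ 2 = S ^ 2 - 4 := Real.sq_sqrt (by nlinarith)
  have hbpos : 0 < b := by
    have := Real.sqrt_nonneg (S ^ 2 - 4)
    rw [hbdef]; linarith
  have hbne : b ≠ 0 := ne_of_gt hbpos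
  have hbeq : b + 1 / b = S := by
    have hb2 : b ^ 2 - S * b + 1 = 0 := by
      rw [hbdef]; nlinarith [hsq]
    field_simp
    nlinarith [hb2]
  refine ⟨b, hbpos, S, by linarith, ?_⟩
  have hbC : (b : ℂ) ≠ 0 := by exact_mod_cast hbne
  have hbeqC : (b : ℂ) + ((b : ℂ))⁻¹ = (S : ℂ) := by
    rw [← one_div]
    exact_mod_cast hbeq
  have hbeqC' : ((b : ℂ))⁻¹ + (b : ℂ) = (S : ℂ) := by rw [add_comm]; exact hbeqC
  have hinv : 1 / ((1 / b : ℝ) : ℂ) = (b : ℂ) := by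
    push_cast; rw [one_div_one_div]
  have hinvC : ((1 / b : ℝ) : ℂ) = 1 / (b : ℂ) := by push_cast; ring
  have hE : Complex.exp (((θ:ℂ) + (Real.pi:ℂ)) * Complex.I)
      = -Complex.exp ((θ : ℂ) * Complex.I) := by
    rw [add_mul, Complex.exp_add, Complex.exp_pi_mul_I]
    ring
  have hE' : Complex.exp ((-(Real.pi:ℂ) + -(θ:ℂ)) * Complex.I)
      = -Complex.exp (-((θ : ℂ) * Complex.I)) := by
    have h : ((-(Real.pi:ℂ) + -(θ:ℂ)) * Complex.I)
        = -((θ:ℂ) * Complex.I) + -((Real.pi:ℂ) * Complex.I) := by ring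
    rw [h, Complex.exp_add, Complex.exp_neg, Complex.exp_neg, Complex.exp_pi_mul_I]
    norm_num
  have hP : ((pTheta θ : ℝ) : ℂ) + ((pTheta (θ + Real.pi) : ℝ) : ℂ) = (S : ℂ) := by
    rw [hSdef]; push_cast; ring
  exact rho_key b θ S hinv hinvC hbeqC hbeqC' hE hE' hP
end

section
/- Let μ ≥ 1, let V_i be the 2 × 2μ matrix whose i-th 2×2 block is the identity I₂, and let W_i be the 2 × 2μ matrix whose i-th 2×2 block is [[0,-1],[1,0]] (other entries zero). Then for every X ∈ M₂(ℂ), Σ_{i=1}^{μ} V_i* X V_i + Σ_{i=1}^{μ} W_i* Xᵗ W_i = Tr(X) · I_{2μ}. -/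
open Matrix Complex

def Vmat (μ : ℕ) (i : Fin μ) : Matrix (Fin 2) (Fin (2 * μ)) ℂ :=
  Matrix.of fun a p => if (p : ℕ) = 2 * (i : ℕ) + (a : ℕ) then 1 else 0

def Wmat (μ : ℕ) (i : Fin μ) : Matrix (Fin 2) (Fin (2 * μ)) ℂ :=
  Matrix.of fun a p =>
    if (p : ℕ) = 2 * (i : ℕ) ∧ (a : ℕ) = 1 then 1
    else if (p : ℕ) = 2 * (i : ℕ) + 1 ∧ (a : ℕ) = 0 then -1 else 0

theorem stmt17 (μ : ℕ) (hμ : 1 ≤ μ) (X : Matrix (Fin 2) (Fin 2) ℂ) :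
    (∑ i : Fin μ, (Vmat μ i)ᴴ * X * Vmat μ i) +
      (∑ i : Fin μ, (Wmat μ i)ᴴ * Xᵀ * Wmat μ i) =
      X.trace • (1 : Matrix (Fin (2 * μ)) (Fin (2 * μ)) ℂ) := by
  ext p q
  simp only [Matrix.add_apply, Matrix.sum_apply, Matrix.mul_apply, Fin.sum_univ_two,
    Vmat, Wmat, Matrix.conjTranspose_apply, Matrix.of_apply, Matrix.transpose_apply,
    Matrix.smul_apply, Matrix.one_apply, Matrix.trace_fin_two, smul_eq_mul,
    Fin.val_zero, Fin.val_one, add_zero, zero_ne_one, one_ne_zero, and_true, and_false,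
    if_true, if_false, eq_self_iff_true,
    apply_ite (star : ℂ → ℂ), star_one, star_zero, star_neg]
  rw [← Finset.sum_add_distrib]
  have hp : (p : ℕ) < 2 * μ := p.isLt
  have hq : (q : ℕ) < 2 * μ := q.isLt
  have hk : (p : ℕ) / 2 < μ := by omega
  rw [Finset.sum_eq_single (⟨(p : ℕ) / 2, hk⟩ : Fin μ)]
  · simp only [Fin.ext_iff, Fin.val_mk]
    split_ifs <;> first | (exfalso; omega) | ring
  · intro b _ hb
    have hb' : (b : ℕ) ≠ (p : ℕ) / 2 := fun h => hb (Fin.ext h)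
    have n1 : ¬ ((p : ℕ) = 2 * (b : ℕ)) := by omega
    have n2 : ¬ ((p : ℕ) = 2 * (b : ℕ) + 1) := by omega
    simp [n1, n2]
  · intro h; exact absurd (Finset.mem_univ _) h
end

section
/- Let V = I₃ and W₁ = E₁₂ - E₂₁, W₂ = E₂₃ - E₃₂, W₃ = E₃₁ - E₁₃ in M₃(ℂ). Then for every X ∈ M₃(ℂ), V* X V + Σ_{j=1}^{3} W_j* Xᵗ W_j = Tr(X) · I₃. -/
/-! Conjugating `Xᵀ` by the real antisymmetric unit `E_ab - E_ba` moves `X_aa`, `X_bb` to the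
diagonal slots `(b,b)`, `(a,a)` and puts `-X_ab`, `-X_ba` in the off-diagonal slots `(a,b)`, `(b,a)`.
Summed over the three pairs of indices this is `Tr(X) · I₃ - X`. -/

open Matrix Complex

theorem conjTranspose_single_sub_single_mul_mul {n R : Type*} [Fintype n] [DecidableEq n]
    [Ring R] [StarRing R] (a b : n) (M : Matrix n n R) :
    (single a b (1 : R) - single b a 1)ᴴ * M * (single a b 1 - single b a 1) =
      single a a (M b b) + single b b (M a a) - single a b (M b a) - single b a (M a b) := by
  simp only [conjTranspose_sub, conjTranspose_single, star_one, sub_mul, mul_sub,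
    single_mul_mul_single, one_mul, mul_one]
  abel

theorem stmt18 (X : Matrix (Fin 3) (Fin 3) ℂ) :
    (1 : Matrix (Fin 3) (Fin 3) ℂ)ᴴ * X * 1 +
      ((Matrix.single 0 1 (1 : ℂ) - Matrix.single 1 0 1)ᴴ * Xᵀ *
          (Matrix.single 0 1 1 - Matrix.single 1 0 1) +
        (Matrix.single 1 2 (1 : ℂ) - Matrix.single 2 1 1)ᴴ * Xᵀ *
          (Matrix.single 1 2 1 - Matrix.single 2 1 1) +
        (Matrix.single 2 0 (1 : ℂ) - Matrix.single 0 2 1)ᴴ * Xᵀ *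
          (Matrix.single 2 0 1 - Matrix.single 0 2 1)) =
      X.trace • (1 : Matrix (Fin 3) (Fin 3) ℂ) := by
  simp only [conjTranspose_single_sub_single_mul_mul, conjTranspose_one, one_mul, mul_one,
    transpose_apply]
  ext i j
  fin_cases i <;> fin_cases j <;> simp [trace, Fin.sum_univ_three, one_apply] <;> ring
end
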